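/- Let H be a finite-dimensional complex Hilbert space, let M_1, …, M_r be subspaces of H, and let T = P_{M_1} P_{M_2} ⋯ P_{M_r}. Then ‖T‖ = 1 if and only if M_1 ∩ ⋯ ∩ M_r ≠ {0}. -/

import Mathlib

/-!
Each orthogonal projection `P` is a contraction, and `‖P x‖ = ‖x‖` only when `P x = x`. Hence
`T = P_{M_1} ⋯ P_{M_r}` is a contraction, and if `‖T x‖ = ‖x‖` then no factor may shrink the
vector it receives, so inductively every factor fixes `x`, i.e. `x ∈ M_1 ∩ ⋯ ∩ M_r`. Conversely a
nonzero common vector is fixed by `T`. In finite dimensions the operator norm is attained on the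
closed unit ball, so `‖T‖ = 1` exactly when `T` preserves the norm of some nonzero vector.
-/

/-- The orthogonal projection onto a subspace `K` of a complex inner product space,
as a bounded operator on the whole space (junk value `0` if `K` does not admit an
orthogonal projection; for a closed subspace of a Hilbert space it is the genuine
orthogonal projection). -/
noncomputable def proj {H : Type*} [NormedAddCommGroup H] [InnerProductSpace ℂ H]
    (K : Submodule ℂ H) : H →L[ℂ] H :=
  letI := Classical.propDecidable (Submodule.HasOrthogonalProjection K)
  if h : Submodule.HasOrthogonalProjection K then
    haveI := h
    K.subtypeL.comp (Submodule.orthogonalProjectionOnto K)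
  else 0

open Metric

namespace ContinuousLinearMap

section ListProd

variable {𝕜 E : Type*} [NormedField 𝕜] [SeminormedAddCommGroup E] [NormedSpace 𝕜 E]
  {l : List (E →L[𝕜] E)}

theorem list_prod_apply_eq_self {x : E} (h : ∀ f ∈ l, f x = x) : l.prod x = x := by
  induction l with
  | nil => rfl
  | cons f l ih =>
    rw [List.forall_mem_cons] at h
    rw [List.prod_cons, mul_apply_eq_comp, ih h.2, h.1]

theorem norm_list_prod_apply_le (hl : ∀ f ∈ l, ∀ x, ‖f x‖ ≤ ‖x‖) (x : E) :
    ‖l.prod x‖ ≤ ‖x‖ := by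
  induction l with
  | nil => rfl
  | cons f l ih =>
    rw [List.forall_mem_cons] at hl
    rw [List.prod_cons, mul_apply_eq_comp]
    exact (hl.1 _).trans (ih hl.2)

theorem apply_eq_self_of_norm_list_prod_apply_eq (hl : ∀ f ∈ l, ∀ x, ‖f x‖ ≤ ‖x‖)
    (hfix : ∀ f ∈ l, ∀ x, ‖f x‖ = ‖x‖ → f x = x) {x : E} (hx : ‖l.prod x‖ = ‖x‖) :
    ∀ f ∈ l, f x = x := by
  induction l with
  | nil => simp
  | cons f l ih =>
    rw [List.forall_mem_cons] at hl hfix ⊢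
    rw [List.prod_cons, mul_apply_eq_comp] at hx
    have htail : ‖l.prod x‖ = ‖x‖ :=
      le_antisymm (norm_list_prod_apply_le hl.2 x) (hx ▸ hl.1 _)
    have hrest := ih hl.2 hfix.2 htail
    rw [list_prod_apply_eq_self hrest] at hx
    exact ⟨hfix.1 x hx, hrest⟩

end ListProd

theorem exists_mem_closedBall_norm_apply_eq_norm {𝕜 E F : Type*} [DenselyNormedField 𝕜]
    [NormedAddCommGroup E] [NormedSpace 𝕜 E] [ProperSpace E] [SeminormedAddCommGroup F]
    [NormedSpace 𝕜 F] (f : E →L[𝕜] F) :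
    ∃ x ∈ closedBall (0 : E) 1, ‖f x‖ = ‖f‖ := by
  have hcpt : IsCompact ((fun x => ‖f x‖) '' closedBall (0 : E) 1) :=
    (isCompact_closedBall 0 1).image (continuous_norm.comp f.continuous)
  obtain ⟨x, hx, hfx⟩ := hcpt.sSup_mem ((nonempty_closedBall.mpr zero_le_one).image _)
  exact ⟨x, hx, hfx.trans f.sSup_unitClosedBall_eq_norm⟩

end ContinuousLinearMap

section proj

variable {H : Type*} [NormedAddCommGroup H] [InnerProductSpace ℂ H]

theorem proj_eq_starProjection (K : Submodule ℂ H) [K.HasOrthogonalProjection] :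
    proj K = K.starProjection :=
  dif_pos ‹_›

theorem norm_proj_apply_le (K : Submodule ℂ H) [K.HasOrthogonalProjection] (x : H) :
    ‖proj K x‖ ≤ ‖x‖ := by
  rw [proj_eq_starProjection]
  exact K.norm_starProjection_apply_le x

theorem proj_apply_eq_self_of_norm_eq (K : Submodule ℂ H) [K.HasOrthogonalProjection] {x : H}
    (h : ‖proj K x‖ = ‖x‖) : proj K x = x := by
  rw [proj_eq_starProjection] at h ⊢
  exact K.starProjection_eq_self_iff.2 ((K.mem_iff_norm_starProjection x).2 h)

theorem mem_iInf_iff_forall_proj_apply_eq {r : ℕ} (M : Fin r → Submodule ℂ H)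
    [∀ i, (M i).HasOrthogonalProjection] {x : H} :
    x ∈ ⨅ i, M i ↔ ∀ f ∈ List.ofFn fun i => proj (M i), f x = x := by
  simp [Submodule.mem_iInf, proj_eq_starProjection, Submodule.starProjection_eq_self_iff]

end proj

theorem stmt5 {H : Type*} [NormedAddCommGroup H] [InnerProductSpace ℂ H]
    [FiniteDimensional ℂ H] {r : ℕ} (M : Fin r → Submodule ℂ H) :
    ‖(List.ofFn fun i => proj (M i)).prod‖ = 1 ↔ (⨅ i, M i) ≠ ⊥ := by
  set l := List.ofFn fun i => proj (M i)
  have hcontr : ∀ f ∈ l, ∀ x, ‖f x‖ ≤ ‖x‖ := by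
    simpa [l] using fun i => norm_proj_apply_le (M i)
  have hfix : ∀ f ∈ l, ∀ x, ‖f x‖ = ‖x‖ → f x = x := by
    simpa [l] using fun i _ => proj_apply_eq_self_of_norm_eq (M i)
  have hle : ‖l.prod‖ ≤ 1 :=
    l.prod.opNorm_le_bound zero_le_one fun x => by
      simpa using ContinuousLinearMap.norm_list_prod_apply_le hcontr x
  rw [Submodule.ne_bot_iff]
  constructor
  · intro hnorm
    obtain ⟨x, hx, hTx⟩ := l.prod.exists_mem_closedBall_norm_apply_eq_norm
    rw [mem_closedBall_zero_iff] at hx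
    have hpres : ‖l.prod x‖ = ‖x‖ :=
      le_antisymm (ContinuousLinearMap.norm_list_prod_apply_le hcontr x) (by linarith)
    refine ⟨x, (mem_iInf_iff_forall_proj_apply_eq M).2 ?_, ?_⟩
    · exact ContinuousLinearMap.apply_eq_self_of_norm_list_prod_apply_eq hcontr hfix hpres
    · rintro rfl
      simp [hnorm] at hTx
  · rintro ⟨x, hx, hx0⟩
    have hTx : l.prod x = x :=
      ContinuousLinearMap.list_prod_apply_eq_self ((mem_iInf_iff_forall_proj_apply_eq M).1 hx)
    refine le_antisymm hle ?_
    have := l.prod.le_opNorm x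
    rw [hTx] at this
    exact (le_mul_iff_one_le_left (norm_pos_iff.2 hx0)).1 this
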